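/- Let n, m ≥ 1, let f : ℝ^n × ℝ^m → ℝ^n be smooth, and let M_u > 0. Call (x, u) admissible if u : [0,∞) → ℝ^m is measurable with ‖u(t)‖ ≤ M_u for a.e. t (equibounded inputs) and x : [0,∞) → ℝ^n is continuous with x(t) = x(0) + ∫_0^t f(x(s), u(s)) ds for all t ≥ 0; assume forward completeness: for every x₀ ∈ ℝ^n and every such u there exists such an x with x(0) = x₀. Assume the system is globally incrementally input-to-state stable: there exist β of class KL and γ of class K∞ such that for all admissible pairs (x_a, u_a), (x_b, u_b) and all t ≥ 0, ‖x_a(t) − x_b(t)‖ ≤ β(‖x_a(0) − x_b(0)‖, t) + γ(esssup_{s∈[0,t]} ‖u_a(s) − u_b(s)‖). Then for every compact set X₀ ⊆ ℝ^n there exist β̂ of class KL, γ̂ of class K∞, and a memory kernel ŵ such that for all admissible pairs (x_a, u_a), (x_b, u_b) with x_a(0), x_b(0) ∈ X₀ and all t ≥ 0: ‖x_a(t) − x_b(t)‖ ≤ β̂(‖x_a(0) − x_b(0)‖, t) + γ̂(esssup_{s∈[0,t]} ŵ(t−s)‖u_a(s) − u_b(s)‖); that is, δISS with equibounded inputs implies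 input-to-state fading memory on every compact set of initial conditions. -/

import Mathlib

open MeasureTheory Filter Set

/-- Essential supremum of a real-valued function over a subset of ℝ
(with respect to Lebesgue measure). -/
noncomputable def essSupOn (f : ℝ → ℝ) (s : Set ℝ) : ℝ :=
  essSup f (volume.restrict s)

/-- Class `K∞` comparison functions. -/
def ClassKInf (γ : ℝ → ℝ) : Prop :=
  ContinuousOn γ (Set.Ici 0) ∧ StrictMonoOn γ (Set.Ici 0) ∧ γ 0 = 0 ∧
    (∀ r ≥ (0:ℝ), 0 ≤ γ r) ∧ Tendsto γ atTop atTop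

/-- Class `KL` comparison functions. -/
def ClassKL (β : ℝ → ℝ → ℝ) : Prop :=
  ContinuousOn (fun p : ℝ × ℝ => β p.1 p.2) (Set.Ici 0 ×ˢ Set.Ici 0) ∧
  (∀ s ≥ (0:ℝ), StrictMonoOn (fun r => β r s) (Set.Ici 0) ∧ β 0 s = 0) ∧
  (∀ r ≥ (0:ℝ), AntitoneOn (fun s => β r s) (Set.Ici 0) ∧
    Tendsto (fun s => β r s) atTop (nhds 0)) ∧
  (∀ r ≥ (0:ℝ), ∀ s ≥ (0:ℝ), 0 ≤ β r s)

/-- Memory kernels: continuous nonincreasing `w : [0,∞) → [0,1]` tending to `0`. -/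
def MemoryKernel (w : ℝ → ℝ) : Prop :=
  ContinuousOn w (Set.Ici 0) ∧ AntitoneOn w (Set.Ici 0) ∧
    (∀ t ≥ (0:ℝ), 0 ≤ w t ∧ w t ≤ 1) ∧ Tendsto w atTop (nhds 0)

/-- `(x, v)` is an admissible state/input pair for `ẋ = f(x, v)` with inputs
equibounded by `Mu`: `v` is measurable with `‖v(t)‖ ≤ Mu` a.e., and `x` is a continuous
solution of the associated integral equation on `[0,∞)`. -/
def Admissible {n m : ℕ}
    (f : EuclideanSpace ℝ (Fin n) → EuclideanSpace ℝ (Fin m) → EuclideanSpace ℝ (Fin n))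
    (Mu : ℝ)
    (x : ℝ → EuclideanSpace ℝ (Fin n)) (v : ℝ → EuclideanSpace ℝ (Fin m)) : Prop :=
  Measurable v ∧ (∀ᵐ t ∂volume, ‖v t‖ ≤ Mu) ∧
    ContinuousOn x (Set.Ici 0) ∧
    ∀ t ≥ (0:ℝ), x t = x 0 + ∫ s in (0:ℝ)..t, f (x s) (v s)

/-! ### Auxiliary essential-supremum lemmas for real-valued functions -/

lemma essSup_zero_real (f : ℝ → ℝ) : essSup f (0 : Measure ℝ) = 0 := by
  rw [essSup, ae_zero]
  have h1 : {a : ℝ | ∀ᶠ x in map f (⊥ : Filter ℝ), x ≤ a} = univ := by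
    ext a; simp
  rw [limsup, limsSup, h1, csInf_of_not_bddBelow, Real.sInf_empty]
  rintro ⟨b, hb⟩
  have := hb (mem_univ (b - 1))
  linarith

lemma essSup_le_real {f : ℝ → ℝ} {μ : Measure ℝ} {c : ℝ} (hc : 0 ≤ c)
    (h0 : ∀ s, 0 ≤ f s) (h : ∀ᵐ s ∂μ, f s ≤ c) : essSup f μ ≤ c := by
  rcases eq_or_ne μ 0 with rfl | hμ
  · rw [essSup_zero_real]; exact hc
  · have : NeBot (ae μ) := ae_neBot.mpr hμ
    exact limsup_le_of_le (isCoboundedUnder_le_of_le _ h0) h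

lemma le_essSup_real {f : ℝ → ℝ} {μ : Measure ℝ} {c : ℝ} (hμ : μ ≠ 0)
    (h0 : ∀ s, 0 ≤ f s) (hb : ∀ᵐ s ∂μ, f s ≤ c) : 0 ≤ essSup f μ := by
  have : NeBot (ae μ) := ae_neBot.mpr hμ
  exact le_limsup_of_frequently_le ((Eventually.of_forall h0).frequently)
    ⟨c, eventually_map.mpr hb⟩

lemma ae_le_essSup_real {f : ℝ → ℝ} {μ : Measure ℝ} {c : ℝ}
    (hb : ∀ᵐ s ∂μ, f s ≤ c) : ∀ᵐ s ∂μ, f s ≤ essSup f μ :=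
  ae_le_essSup ⟨c, eventually_map.mpr hb⟩

lemma restrict_Icc_self_eq_zero (a : ℝ) : volume.restrict (Icc a a) = 0 := by
  rw [Measure.restrict_eq_zero, Icc_self]
  exact measure_singleton a

lemma restrict_Icc_ne_zero {a b : ℝ} (h : a < b) : volume.restrict (Icc a b) ≠ 0 := by
  intro hc
  rw [Measure.restrict_eq_zero, Real.volume_Icc, ENNReal.ofReal_eq_zero] at hc
  linarith

/-! ### Auxiliary lemmas on admissible pairs -/

section Adm

variable {n m : ℕ}
  {f : EuclideanSpace ℝ (Fin n) → EuclideanSpace ℝ (Fin m) → EuclideanSpace ℝ (Fin n)}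
  {Mu : ℝ} {x : ℝ → EuclideanSpace ℝ (Fin n)} {v : ℝ → EuclideanSpace ℝ (Fin m)}

lemma adm_integrableOn (hf : Continuous (Function.uncurry f))
    (h : Admissible f Mu x v) (B : ℝ) :
    IntegrableOn (fun s => f (x s) (v s)) (Icc 0 B) volume := by
  obtain ⟨hv, hvb, hx, _⟩ := h
  have hxc : ContinuousOn x (Icc 0 B) := hx.mono (fun s hs => hs.1)
  obtain ⟨Cx, hCx⟩ := (isCompact_Icc (a := (0:ℝ)) (b := B)).exists_bound_of_continuousOn hxc
  set K : Set (EuclideanSpace ℝ (Fin n) × EuclideanSpace ℝ (Fin m)) :=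
    Metric.closedBall 0 Cx ×ˢ Metric.closedBall 0 (max Mu 0) with hK
  have hKc : IsCompact K :=
    (isCompact_closedBall _ _).prod (isCompact_closedBall _ _)
  obtain ⟨Cf, hCf⟩ := hKc.exists_bound_of_continuousOn hf.continuousOn
  have hxm : AEMeasurable x (volume.restrict (Icc 0 B)) :=
    hxc.aemeasurable measurableSet_Icc
  have hm : AEMeasurable (fun s => f (x s) (v s)) (volume.restrict (Icc 0 B)) := by
    have : AEMeasurable (fun s => (x s, v s)) (volume.restrict (Icc 0 B)) :=
      hxm.prodMk hv.aemeasurable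
    exact (hf.measurable.comp_aemeasurable this :)
  refine ⟨hm.aestronglyMeasurable, ?_⟩
  have hb : ∀ᵐ s ∂(volume.restrict (Icc 0 B)), ‖f (x s) (v s)‖ ≤ Cf := by
    filter_upwards [ae_restrict_mem measurableSet_Icc, ae_restrict_of_ae hvb] with s hs hvs
    refine hCf (x s, v s) ⟨Metric.mem_closedBall.2 ?_, Metric.mem_closedBall.2 ?_⟩
    · simpa [dist_eq_norm] using hCx s hs
    · simp only [dist_zero_right]; exact le_trans hvs (le_max_left _ _)
  exact (HasFiniteIntegral.restrict_of_bounded (C := Cf) (by simpa using measure_Icc_lt_top) hb)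

lemma adm_intervalIntegrable (hf : Continuous (Function.uncurry f))
    (h : Admissible f Mu x v) {a b : ℝ} (ha : 0 ≤ a) (hab : a ≤ b) :
    IntervalIntegrable (fun s => f (x s) (v s)) volume a b := by
  rw [intervalIntegrable_iff_integrableOn_Ioc_of_le hab]
  exact (adm_integrableOn hf h b).mono_set (fun s hs => ⟨le_trans ha (le_of_lt hs.1), hs.2⟩)

lemma adm_shift (hf : Continuous (Function.uncurry f))
    (h : Admissible f Mu x v) {τ : ℝ} (hτ : 0 ≤ τ) :
    Admissible f Mu (fun s => x (s + τ)) (fun s => v (s + τ)) := by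
  obtain ⟨hv, hvb, hx, hint⟩ := h
  refine ⟨hv.comp (measurable_add_const τ), ?_, ?_, ?_⟩
  · exact (measurePreserving_add_right volume τ).quasiMeasurePreserving.ae hvb
  · exact hx.comp (continuous_add_right τ).continuousOn
      (fun s hs => by simpa using add_nonneg hs hτ)
  · intro t ht
    have h1 := hint (t + τ) (by linarith)
    have h2 := hint τ hτ
    have h3 : x (t + τ) - x τ = ∫ s in τ..(t + τ), f (x s) (v s) := by
      rw [h1, h2]
      rw [← intervalIntegral.integral_interval_sub_left
        (adm_intervalIntegrable hf ⟨hv, hvb, hx, hint⟩ le_rfl (by linarith))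
        (adm_intervalIntegrable hf ⟨hv, hvb, hx, hint⟩ le_rfl hτ)]
      abel
    have h4 : (∫ s in (0:ℝ)..t, f (x (s + τ)) (v (s + τ))) = ∫ s in τ..(t + τ), f (x s) (v s) := by
      simpa using intervalIntegral.integral_comp_add_right (a := 0) (b := t)
        (fun s => f (x s) (v s)) τ
    rw [h4, ← h3]; simp

end Adm

/-! ### Construction of the new gain function -/

noncomputable def Tm (ρ : ℝ) : ℝ := max 0 (-(Real.log ρ)/2)

noncomputable def mfun (Mu ρ : ℝ) : ℝ := min (2*Mu) (max ρ (Real.sqrt ρ))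

lemma Tm_nonneg (ρ : ℝ) : 0 ≤ Tm ρ := le_max_left _ _

lemma Tm_anti : AntitoneOn Tm (Set.Ioi 0) := fun a ha _b _hb hab =>
  max_le_max le_rfl (by have := Real.log_le_log ha hab; linarith)

lemma mfun_nonneg {Mu ρ : ℝ} (hMu : 0 < Mu) (_hρ : 0 ≤ ρ) : 0 ≤ mfun Mu ρ :=
  le_min (by linarith) (le_max_of_le_right (Real.sqrt_nonneg _))

lemma mfun_mono {Mu : ℝ} : Monotone (mfun Mu) := fun _a _b hab =>
  min_le_min le_rfl (max_le_max hab (Real.sqrt_le_sqrt hab))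

lemma exp_Tm_mul {ρ : ℝ} (hρ : 0 < ρ) : Real.exp (Tm ρ) * ρ ≤ max ρ (Real.sqrt ρ) := by
  rcases le_or_gt 1 ρ with h1 | h1
  · have : Tm ρ = 0 := by
      have : 0 ≤ Real.log ρ := Real.log_nonneg h1
      simp [Tm, max_eq_left]; linarith
    rw [this]; simp
  · have hlog : Real.log ρ ≤ 0 := Real.log_nonpos (le_of_lt hρ) (le_of_lt h1)
    have hTm : Tm ρ = -(Real.log ρ)/2 := max_eq_right (by linarith)
    have : Real.exp (Tm ρ) * ρ = Real.sqrt ρ := by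
      rw [hTm]
      have hρe : ρ = Real.exp (Real.log ρ) := (Real.exp_log hρ).symm
      rw [← Real.exp_log (Real.sqrt_pos.mpr hρ), Real.log_sqrt (le_of_lt hρ)]
      nth_rewrite 2 [hρe]
      rw [← Real.exp_add]; ring_nf
    rw [this]; exact le_max_right _ _

noncomputable def Gc (β : ℝ → ℝ → ℝ) (γ : ℝ → ℝ) (C Mu ρ : ℝ) : ℝ :=
  β C (Tm ρ) + γ (mfun Mu ρ)

noncomputable def gam' (β : ℝ → ℝ → ℝ) (γ : ℝ → ℝ) (C Mu ρ : ℝ) : ℝ :=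
  ρ + (if ρ ≤ 0 then 0 else Gc β γ C Mu ρ)

variable {β : ℝ → ℝ → ℝ} {γ : ℝ → ℝ} {C Mu : ℝ}

lemma Gc_nonneg (hβ : ClassKL β) (hγ : ClassKInf γ) (hC : 0 ≤ C) (hMu : 0 < Mu)
    {ρ : ℝ} (hρ : 0 ≤ ρ) : 0 ≤ Gc β γ C Mu ρ :=
  add_nonneg (hβ.2.2.2 C hC (Tm ρ) (Tm_nonneg ρ)) (hγ.2.2.2.1 _ (mfun_nonneg hMu hρ))

lemma Gc_mono (hβ : ClassKL β) (hγ : ClassKInf γ) (hC : 0 ≤ C) (hMu : 0 < Mu) :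
    MonotoneOn (Gc β γ C Mu) (Set.Ioi 0) := by
  intro a ha b hb hab
  refine add_le_add ?_ ?_
  · exact (hβ.2.2.1 C hC).1 (Tm_nonneg b) (Tm_nonneg a) (Tm_anti ha hb hab)
  · exact (hγ.2.1.monotoneOn) (mfun_nonneg hMu (le_of_lt ha))
      (mfun_nonneg hMu (le_of_lt (lt_of_lt_of_le ha hab))) (mfun_mono hab)

lemma gam'_zero : gam' β γ C Mu 0 = 0 := by simp [gam']

lemma gam'_nonneg (hβ : ClassKL β) (hγ : ClassKInf γ) (hC : 0 ≤ C) (hMu : 0 < Mu)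
    {ρ : ℝ} (hρ : 0 ≤ ρ) : 0 ≤ gam' β γ C Mu ρ := by
  unfold gam'
  split_ifs with h
  · linarith
  · have := Gc_nonneg hβ hγ hC hMu hρ; linarith

lemma gam'_strictMono (hβ : ClassKL β) (hγ : ClassKInf γ) (hC : 0 ≤ C) (hMu : 0 < Mu) :
    StrictMonoOn (gam' β γ C Mu) (Set.Ici 0) := by
  intro a ha b hb hab
  have hb0 : 0 < b := lt_of_le_of_lt ha hab
  unfold gam'
  rw [if_neg (not_le.mpr hb0)]
  rcases le_or_gt a 0 with ha0 | ha0
  · rw [if_pos ha0]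
    have := Gc_nonneg hβ hγ hC hMu (le_of_lt hb0)
    linarith
  · rw [if_neg (not_le.mpr ha0)]
    have := Gc_mono hβ hγ hC hMu ha0 hb0 (le_of_lt hab)
    linarith

lemma gam'_tendsto_atTop (hβ : ClassKL β) (hγ : ClassKInf γ) (hC : 0 ≤ C) (hMu : 0 < Mu) :
    Tendsto (gam' β γ C Mu) atTop atTop := by
  refine tendsto_atTop_mono' atTop ?_ tendsto_id
  filter_upwards [eventually_gt_atTop (0:ℝ)] with ρ hρ
  have := Gc_nonneg hβ hγ hC hMu (le_of_lt hρ)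
  simp only [gam', if_neg (not_le.mpr hρ), id]
  linarith

lemma mfun_cont {Mu : ℝ} : Continuous (mfun Mu) :=
  continuous_const.min (continuous_id.max Real.continuous_sqrt)

lemma Gc_contOn (hβ : ClassKL β) (hγ : ClassKInf γ) (hC : 0 ≤ C) (hMu : 0 < Mu) :
    ContinuousOn (Gc β γ C Mu) (Set.Ioi 0) := by
  have hTm : ContinuousOn Tm (Set.Ioi 0) := by
    intro ρ hρ
    have h2 : ContinuousAt (fun y : ℝ => -(Real.log y)/2) ρ :=
      ((Real.continuousAt_log (ne_of_gt hρ)).neg).div_const 2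
    have h : ContinuousAt (fun y : ℝ => max 0 (-(Real.log y)/2)) ρ :=
      ((continuous_const.max continuous_id).continuousAt).comp h2
    exact h.continuousWithinAt
  refine ContinuousOn.add ?_ ?_
  · have : ContinuousOn (fun ρ : ℝ => ((C, Tm ρ) : ℝ × ℝ)) (Set.Ioi 0) :=
      continuousOn_const.prodMk hTm
    exact hβ.1.comp this (fun ρ _hρ => ⟨hC, Tm_nonneg ρ⟩)
  · exact hγ.1.comp mfun_cont.continuousOn
      (fun ρ hρ => mfun_nonneg hMu (le_of_lt hρ))

lemma gam'_cont (hβ : ClassKL β) (hγ : ClassKInf γ) (hC : 0 ≤ C) (hMu : 0 < Mu) :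
    ContinuousOn (gam' β γ C Mu) (Set.Ici 0) := by
  have hfull : ContinuousOn (fun ρ => ρ + Gc β γ C Mu ρ) (Set.Ioi 0) :=
    continuousOn_id.add (Gc_contOn hβ hγ hC hMu)
  intro ρ hρ
  rcases eq_or_lt_of_le (Set.mem_Ici.mp hρ : (0:ℝ) ≤ ρ) with rfl | hρ0
  · rw [← Set.Ioi_insert, continuousWithinAt_insert_self]
    unfold ContinuousWithinAt
    rw [gam'_zero]
    have heq : ∀ᶠ y in nhdsWithin 0 (Set.Ioi 0),
        gam' β γ C Mu y = y + Gc β γ C Mu y := by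
      filter_upwards [eventually_mem_nhdsWithin] with y hy
      simp [gam', if_neg (not_le.mpr (Set.mem_Ioi.mp hy : (0:ℝ) < y))]
    rw [tendsto_congr' heq]
    have hTmTop : Tendsto Tm (nhdsWithin 0 (Set.Ioi 0)) atTop := by
      have h1 : Tendsto (fun ρ => -Real.log ρ) (nhdsWithin 0 (Set.Ioi 0)) atTop :=
        tendsto_neg_atBot_atTop.comp Real.tendsto_log_nhdsGT_zero
      exact tendsto_atTop_mono (fun ρ => le_max_right _ _) (h1.atTop_div_const two_pos)
    have hβ0 : Tendsto (fun ρ => β C (Tm ρ)) (nhdsWithin 0 (Set.Ioi 0)) (nhds 0) :=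
      ((hβ.2.2.1 C hC).2).comp hTmTop
    have hγ0 : Tendsto (fun ρ => γ (mfun Mu ρ)) (nhdsWithin 0 (Set.Ioi 0)) (nhds 0) := by
      have hm0 : Tendsto (mfun Mu) (nhdsWithin 0 (Set.Ioi 0))
          (nhdsWithin 0 (Set.Ici 0)) := by
        refine tendsto_nhdsWithin_of_tendsto_nhds_of_eventually_within _ ?_ ?_
        · have := (mfun_cont (Mu := Mu)).continuousAt (x := 0)
          rw [ContinuousAt] at this
          simpa [mfun, Real.sqrt_zero, min_eq_right (by linarith : (0:ℝ) ≤ 2*Mu)]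
            using this.mono_left nhdsWithin_le_nhds
        · filter_upwards [eventually_mem_nhdsWithin] with y hy
          exact mfun_nonneg hMu (le_of_lt hy)
      have := ((hγ.1 0 (by simp)).tendsto).comp hm0
      rwa [hγ.2.2.1] at this
    have : Tendsto (fun ρ : ℝ => ρ + (β C (Tm ρ) + γ (mfun Mu ρ)))
        (nhdsWithin 0 (Set.Ioi 0)) (nhds (0 + (0 + 0))) :=
      (tendsto_id.mono_left nhdsWithin_le_nhds).add (hβ0.add hγ0)
    simpa [Gc] using this
  · have hat : ContinuousAt (fun y => y + Gc β γ C Mu y) ρ :=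
      (hfull ρ hρ0).continuousAt (Ioi_mem_nhds hρ0)
    have : ContinuousAt (gam' β γ C Mu) ρ := by
      refine hat.congr ?_
      filter_upwards [Ioi_mem_nhds hρ0] with y hy
      simp [gam', if_neg (not_le.mpr (Set.mem_Ioi.mp hy : (0:ℝ) < y))]
    exact this.continuousWithinAt

lemma gam'_classKInf (hβ : ClassKL β) (hγ : ClassKInf γ) (hC : 0 ≤ C) (hMu : 0 < Mu) :
    ClassKInf (gam' β γ C Mu) :=
  ⟨gam'_cont hβ hγ hC hMu, gam'_strictMono hβ hγ hC hMu, gam'_zero,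
    fun _r hr => gam'_nonneg hβ hγ hC hMu hr, gam'_tendsto_atTop hβ hγ hC hMu⟩

lemma memoryKernel_exp : MemoryKernel (fun τ => Real.exp (-τ)) := by
  refine ⟨(Real.continuous_exp.comp continuous_neg).continuousOn,
    fun a _ha b _hb hab => Real.exp_le_exp.mpr (by linarith), fun t ht =>
      ⟨(Real.exp_pos _).le, Real.exp_le_one_iff.mpr (by linarith)⟩, ?_⟩
  exact Real.tendsto_exp_neg_atTop_nhds_zero
/-- for a smooth, forward-complete, time-invariant system with equibounded
inputs, global incremental input-to-state stability implies input-to-state fading memory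
on every compact set of initial conditions. -/
theorem stmt13 (n m : ℕ) (hn : 1 ≤ n) (hm : 1 ≤ m)
    (f : EuclideanSpace ℝ (Fin n) → EuclideanSpace ℝ (Fin m) → EuclideanSpace ℝ (Fin n))
    (hf : ContDiff ℝ (⊤ : ℕ∞) (Function.uncurry f))
    (Mu : ℝ) (hMu : 0 < Mu)
    (hcomplete : ∀ x₀ : EuclideanSpace ℝ (Fin n),
      ∀ v : ℝ → EuclideanSpace ℝ (Fin m), Measurable v → (∀ᵐ t ∂volume, ‖v t‖ ≤ Mu) →
      ∃ x : ℝ → EuclideanSpace ℝ (Fin n), Admissible f Mu x v ∧ x 0 = x₀)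
    (β : ℝ → ℝ → ℝ) (hβ : ClassKL β)
    (γ : ℝ → ℝ) (hγ : ClassKInf γ)
    (hδISS : ∀ (x_a : ℝ → EuclideanSpace ℝ (Fin n)) (u_a : ℝ → EuclideanSpace ℝ (Fin m))
        (x_b : ℝ → EuclideanSpace ℝ (Fin n)) (u_b : ℝ → EuclideanSpace ℝ (Fin m)),
      Admissible f Mu x_a u_a → Admissible f Mu x_b u_b →
      ∀ t ≥ (0:ℝ), ‖x_a t - x_b t‖ ≤ β ‖x_a 0 - x_b 0‖ t +
        γ (essSupOn (fun s => ‖u_a s - u_b s‖) (Set.Icc 0 t))) :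
    ∀ X₀ : Set (EuclideanSpace ℝ (Fin n)), IsCompact X₀ →
      ∃ (β' : ℝ → ℝ → ℝ) (γ' : ℝ → ℝ) (w' : ℝ → ℝ),
        ClassKL β' ∧ ClassKInf γ' ∧ MemoryKernel w' ∧
        ∀ (x_a : ℝ → EuclideanSpace ℝ (Fin n)) (u_a : ℝ → EuclideanSpace ℝ (Fin m))
          (x_b : ℝ → EuclideanSpace ℝ (Fin n)) (u_b : ℝ → EuclideanSpace ℝ (Fin m)),
          Admissible f Mu x_a u_a → Admissible f Mu x_b u_b →
          x_a 0 ∈ X₀ → x_b 0 ∈ X₀ →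
          ∀ t ≥ (0:ℝ), ‖x_a t - x_b t‖ ≤ β' ‖x_a 0 - x_b 0‖ t +
            γ' (essSupOn (fun s => w' (t - s) * ‖u_a s - u_b s‖) (Set.Icc 0 t)) := by
  intro X₀ hX₀
  -- a bound on the diameter of X₀
  obtain ⟨R, hR⟩ := hX₀.isBounded.subset_closedBall 0
  set D : ℝ := 2 * max R 0 with hDdef
  have hD0 : 0 ≤ D := by positivity
  have hD : ∀ a ∈ X₀, ∀ b ∈ X₀, ‖a - b‖ ≤ D := by
    intro a ha b hb
    have h1 : ‖a‖ ≤ R := by simpa [dist_zero_right] using Metric.mem_closedBall.mp (hR ha)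
    have h2 : ‖b‖ ≤ R := by simpa [dist_zero_right] using Metric.mem_closedBall.mp (hR hb)
    have := norm_sub_le a b
    have hRm : R ≤ max R 0 := le_max_left _ _
    simp only [hDdef]; linarith
  set C : ℝ := β D 0 + γ (2*Mu) with hCdef
  have hC0 : 0 ≤ C :=
    add_nonneg (hβ.2.2.2 D hD0 0 le_rfl) (hγ.2.2.2.1 _ (by linarith))
  have hfc : Continuous (Function.uncurry f) := hf.continuous
  refine ⟨β, gam' β γ C Mu, fun τ => Real.exp (-τ), hβ,
    gam'_classKInf hβ hγ hC0 hMu, memoryKernel_exp, ?_⟩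
  intro x_a u_a x_b u_b ha hb ha0 hb0 t ht
  set r : ℝ := ‖x_a 0 - x_b 0‖ with hrdef
  have hr0 : 0 ≤ r := norm_nonneg _
  have hrD : r ≤ D := hD _ ha0 _ hb0
  have hΔ2Mu : ∀ᵐ s ∂volume, ‖u_a s - u_b s‖ ≤ 2*Mu := by
    filter_upwards [ha.2.1, hb.2.1] with s h1 h2
    have := norm_sub_le (u_a s) (u_b s)
    linarith
  -- basic facts about the unweighted essential suprema
  have hEsups : ∀ τ' : ℝ, 0 ≤ τ' →
      0 ≤ essSupOn (fun s => ‖u_a s - u_b s‖) (Icc 0 τ') ∧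
      essSupOn (fun s => ‖u_a s - u_b s‖) (Icc 0 τ') ≤ 2*Mu := by
    intro τ' hτ'
    constructor
    · rcases eq_or_lt_of_le hτ' with rfl | h
      · rw [essSupOn, restrict_Icc_self_eq_zero, essSup_zero_real]
      · exact le_essSup_real (restrict_Icc_ne_zero h) (fun s => norm_nonneg _)
          (ae_restrict_of_ae hΔ2Mu)
    · exact essSup_le_real (by linarith) (fun s => norm_nonneg _) (ae_restrict_of_ae hΔ2Mu)
  -- the uniform bound on the difference of trajectories
  have hL1 : ∀ τ' : ℝ, 0 ≤ τ' → ‖x_a τ' - x_b τ'‖ ≤ C := by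
    intro τ' hτ'
    have hδ := hδISS x_a u_a x_b u_b ha hb τ' hτ'
    have h1 : β r τ' ≤ β D τ' :=
      (hβ.2.1 τ' hτ').1.monotoneOn (Set.mem_Ici.mpr hr0) (Set.mem_Ici.mpr hD0) hrD
    have h2 : β D τ' ≤ β D 0 :=
      (hβ.2.2.1 D hD0).1 (Set.mem_Ici.mpr le_rfl) (Set.mem_Ici.mpr hτ') hτ'
    have h3 : γ (essSupOn (fun s => ‖u_a s - u_b s‖) (Icc 0 τ')) ≤ γ (2*Mu) :=
      hγ.2.1.monotoneOn (Set.mem_Ici.mpr (hEsups τ' hτ').1)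
        (Set.mem_Ici.mpr (by linarith)) (hEsups τ' hτ').2
    simp only [hCdef]
    linarith
  -- weighted essential supremum
  set g : ℝ → ℝ := fun s => Real.exp (-(t - s)) * ‖u_a s - u_b s‖ with hgdef
  set E : ℝ := essSupOn g (Icc 0 t) with hEdef
  show ‖x_a t - x_b t‖ ≤ β r t + gam' β γ C Mu E
  have hg0 : ∀ s, 0 ≤ g s := fun s => mul_nonneg (Real.exp_pos _).le (norm_nonneg _)
  have hg2Mu : ∀ᵐ s ∂(volume.restrict (Icc 0 t)), g s ≤ 2*Mu := by
    filter_upwards [ae_restrict_mem measurableSet_Icc, ae_restrict_of_ae hΔ2Mu] with s hs h2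
    have hexp1 : Real.exp (-(t - s)) ≤ 1 := Real.exp_le_one_iff.mpr (by linarith [hs.2])
    calc g s ≤ 1 * (2*Mu) :=
          mul_le_mul hexp1 h2 (norm_nonneg _) zero_le_one
      _ = 2*Mu := one_mul _
  have hE0 : 0 ≤ E := by
    rcases eq_or_lt_of_le ht with rfl | htpos
    · rw [hEdef, essSupOn, restrict_Icc_self_eq_zero, essSup_zero_real]
    · exact le_essSup_real (restrict_Icc_ne_zero htpos) hg0 hg2Mu
  have hgle : ∀ᵐ s ∂volume, s ∈ Icc (0:ℝ) t → g s ≤ E :=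
    (ae_restrict_iff' measurableSet_Icc).mp (ae_le_essSup_real hg2Mu)
  have hβrt : 0 ≤ β r t := hβ.2.2.2 r hr0 t ht
  rcases eq_or_lt_of_le hE0 with hE | hE
  · -- E = 0 : the inputs agree a.e. on [0, t]
    have hδ := hδISS x_a u_a x_b u_b ha hb t ht
    have hE₀ : essSupOn (fun s => ‖u_a s - u_b s‖) (Icc 0 t) = 0 := by
      refine le_antisymm ?_ (hEsups t ht).1
      rcases eq_or_lt_of_le ht with rfl | htpos
      · rw [essSupOn, restrict_Icc_self_eq_zero, essSup_zero_real]
      · refine essSup_le_real le_rfl (fun s => norm_nonneg _) ?_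
        have := (ae_restrict_iff' measurableSet_Icc).mpr hgle
        filter_upwards [this, ae_restrict_mem measurableSet_Icc] with s h1 h2
        have h3 : g s ≤ 0 := by rw [← hE] at h1; exact h1
        simp only [hgdef] at h3
        have h4 := Real.exp_pos (-(t - s))
        nlinarith [norm_nonneg (u_a s - u_b s)]
    rw [hE₀, hγ.2.2.1] at hδ
    rw [← hE, gam'_zero]
    linarith
  · -- E > 0
    set T : ℝ := Tm E with hTdef
    have hT0 : 0 ≤ T := Tm_nonneg E
    have hexpT : Real.exp T * E ≤ max E (Real.sqrt E) := exp_Tm_mul hE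
    have hc0 : 0 ≤ mfun Mu E := mfun_nonneg hMu hE0
    have hgam'E : gam' β γ C Mu E = E + (β C T + γ (mfun Mu E)) := by
      rw [gam', if_neg (not_le.mpr hE)]; rfl
    rcases le_or_gt T t with hTt | htT
    · -- split the trajectory at τ = t - T
      set τ : ℝ := t - T with hτdef
      have hτ0 : 0 ≤ τ := by simp only [hτdef]; linarith
      have haS := adm_shift hfc ha hτ0
      have hbS := adm_shift hfc hb hτ0
      have hδ := hδISS _ _ _ _ haS hbS T hT0
      simp only [zero_add] at hδ
      have hTτ : T + τ = t := by simp only [hτdef]; ring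
      rw [hTτ] at hδ
      -- bound the initial-condition term
      have hxa : ‖x_a τ - x_b τ‖ ≤ C := hL1 τ hτ0
      have hβ1 : β ‖x_a τ - x_b τ‖ T ≤ β C T :=
        (hβ.2.1 T hT0).1.monotoneOn (Set.mem_Ici.mpr (norm_nonneg _))
          (Set.mem_Ici.mpr hC0) hxa
      -- bound the input term
      have hshift1 : ∀ᵐ s ∂volume, (s + τ ∈ Icc (0:ℝ) t → g (s + τ) ≤ E) :=
        (measurePreserving_add_right volume τ).quasiMeasurePreserving.ae hgle
      have hshift2 : ∀ᵐ s ∂volume, ‖u_a (s + τ) - u_b (s + τ)‖ ≤ 2*Mu :=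
        (measurePreserving_add_right volume τ).quasiMeasurePreserving.ae hΔ2Mu
      have hE'le : essSupOn (fun s => ‖u_a (s + τ) - u_b (s + τ)‖) (Icc 0 T) ≤ mfun Mu E := by
        refine essSup_le_real hc0 (fun s => norm_nonneg _) ?_
        filter_upwards [ae_restrict_mem measurableSet_Icc, ae_restrict_of_ae hshift1,
          ae_restrict_of_ae hshift2] with s hs h1 h2
        have hmem : s + τ ∈ Icc (0:ℝ) t :=
          ⟨add_nonneg hs.1 hτ0, by simp only [hτdef]; linarith [hs.2]⟩
        have h3 : g (s + τ) ≤ E := h1 hmem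
        refine le_min h2 ?_
        have key : ‖u_a (s + τ) - u_b (s + τ)‖ = Real.exp (t - (s + τ)) * g (s + τ) := by
          simp only [hgdef]
          rw [← mul_assoc, ← Real.exp_add]
          ring_nf
          simp
        rw [key]
        calc Real.exp (t - (s + τ)) * g (s + τ) ≤ Real.exp (t - (s + τ)) * E :=
              mul_le_mul_of_nonneg_left h3 (Real.exp_pos _).le
          _ ≤ Real.exp T * E := by
              refine mul_le_mul_of_nonneg_right (Real.exp_le_exp.mpr ?_) hE0
              simp only [hτdef]; linarith [hs.1]
          _ ≤ max E (Real.sqrt E) := hexpT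
      have hE'0 : 0 ≤ essSupOn (fun s => ‖u_a (s + τ) - u_b (s + τ)‖) (Icc 0 T) := by
        rcases eq_or_lt_of_le hT0 with hTeq | hTpos
        · rw [essSupOn, ← hTeq, restrict_Icc_self_eq_zero, essSup_zero_real]
        · exact le_essSup_real (restrict_Icc_ne_zero hTpos) (fun s => norm_nonneg _)
            (ae_restrict_of_ae hshift2)
      have hγ1 : γ (essSupOn (fun s => ‖u_a (s + τ) - u_b (s + τ)‖) (Icc 0 T))
          ≤ γ (mfun Mu E) :=
        hγ.2.1.monotoneOn (Set.mem_Ici.mpr hE'0) (Set.mem_Ici.mpr hc0) hE'le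
      rw [hgam'E]
      linarith
    · -- t < T : use the δISS estimate directly
      have hδ := hδISS x_a u_a x_b u_b ha hb t ht
      have hE₀le : essSupOn (fun s => ‖u_a s - u_b s‖) (Icc 0 t) ≤ mfun Mu E := by
        refine essSup_le_real hc0 (fun s => norm_nonneg _) ?_
        filter_upwards [ae_restrict_mem measurableSet_Icc,
          (ae_restrict_iff' measurableSet_Icc).mpr hgle,
          ae_restrict_of_ae hΔ2Mu] with s hs h1 h2
        have h3 : g s ≤ E := h1
        refine le_min h2 ?_
        have key : ‖u_a s - u_b s‖ = Real.exp (t - s) * g s := by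
          simp only [hgdef]
          rw [← mul_assoc, ← Real.exp_add]
          ring_nf
          simp
        rw [key]
        calc Real.exp (t - s) * g s ≤ Real.exp (t - s) * E :=
              mul_le_mul_of_nonneg_left h3 (Real.exp_pos _).le
          _ ≤ Real.exp T * E := by
              refine mul_le_mul_of_nonneg_right (Real.exp_le_exp.mpr ?_) hE0
              linarith [hs.1]
          _ ≤ max E (Real.sqrt E) := hexpT
      have hγ1 : γ (essSupOn (fun s => ‖u_a s - u_b s‖) (Icc 0 t)) ≤ γ (mfun Mu E) :=
        hγ.2.1.monotoneOn (Set.mem_Ici.mpr (hEsups t ht).1) (Set.mem_Ici.mpr hc0) hE₀le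
      have hβC : 0 ≤ β C T := hβ.2.2.2 C hC0 T hT0
      rw [hgam'E]
      linarith
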